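/- arXiv:2106.05421 — 2 statements merged into one kernel-verified Lean document; each statement's English description precedes it below -/
import Mathlib

section
/- For every post-expectation E : Σ → ℝ≥0∞ and every monotone sequence of expectations X : ℕ → (Σ → ℝ≥0∞), the characteristic function commutes with countable suprema: Φ_E (⨆ n, X n) = ⨆ n, Φ_E (X n). Consequently, by the Kleene fixed-point theorem, lfp Φ_E = ⨆ n, Φ_E^[n] ⊥, where Φ_E^[n] denotes the n-fold iterate of Φ_E and ⊥ is the constant-zero expectation. -/
open ENNReal

/-- The characteristic function of the loop `while G do body` with respect to
post-expectation `E`. -/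
noncomputable def Phi {S : Type*} (G : S → Prop) [DecidablePred G] (body : S → PMF S)
    (E : S → ℝ≥0∞) (X : S → ℝ≥0∞) : S → ℝ≥0∞ :=
  fun σ => if G σ then ∑' τ, body σ τ * X τ else E σ

theorem Phi_monotone {S : Type*} (G : S → Prop) [DecidablePred G] (body : S → PMF S)
    (E : S → ℝ≥0∞) : Monotone (Phi G body E) := by
  intro X Y hXY σ
  simp only [Phi]
  split
  · exact ENNReal.tsum_le_tsum fun τ => by gcongr <;> exact hXY τ
  · exact le_rfl

/-- The characteristic function, bundled as a monotone map on the complete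
lattice of expectations. -/
noncomputable def PhiHom {S : Type*} (G : S → Prop) [DecidablePred G] (body : S → PMF S)
    (E : S → ℝ≥0∞) : (S → ℝ≥0∞) →o (S → ℝ≥0∞) :=
  ⟨Phi G body E, Phi_monotone G body E⟩

/-- The stopped `n`-step kernels of the loop `while G do body`. -/
noncomputable def mu {S : Type*} (G : S → Prop) [DecidablePred G] [DecidableEq S]
    (body : S → PMF S) : ℕ → S → S → ℝ≥0∞
  | 0 => fun σ τ => if ¬ G σ ∧ τ = σ then 1 else 0
  | n + 1 => fun σ =>
      if G σ then (fun τ => ∑' σ', body σ σ' * mu G body n σ' τ) else mu G body 0 σ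

/-- The loop's output sub-distribution. -/
noncomputable def W {S : Type*} (G : S → Prop) [DecidablePred G] [DecidableEq S]
    (body : S → PMF S) (σ τ : S) : ℝ≥0∞ :=
  ⨆ n, mu G body n σ τ

/-! Both halves reduce to monotone convergence for sums in `ℝ≥0∞`: a sum of
nonnegative terms commutes with directed suprema, so `Φ_E` is ω-continuous, and
Kleene's fixed-point theorem applies on the complete lattice of expectations. -/

theorem ENNReal.tsum_iSup_of_monotone {α ι : Type*} [Preorder ι] [IsDirectedOrder ι]
    {f : ι → α → ℝ≥0∞} (hf : Monotone f) :
    ∑' a, ⨆ i, f i a = ⨆ i, ∑' a, f i a := by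
  simp_rw [ENNReal.tsum_eq_iSup_sum,
    ENNReal.finsetSum_iSup_of_monotone fun a _ _ hij => hf hij a]
  exact iSup_comm

theorem OrderHom.ωScottContinuous_of_map_iSup {α β : Type*} [CompleteLattice α]
    [CompleteLattice β] (f : α →o β)
    (hf : ∀ c : ℕ → α, Monotone c → f (⨆ n, c n) = ⨆ n, f (c n)) :
    OmegaCompletePartialOrder.ωScottContinuous f :=
  .of_map_ωSup_of_orderHom fun c => hf c c.monotone

theorem Phi_iSup_of_monotone {S : Type*} (G : S → Prop) [DecidablePred G] (body : S → PMF S)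
    (E : S → ℝ≥0∞) (X : ℕ → S → ℝ≥0∞) (hX : Monotone X) :
    Phi G body E (⨆ n, X n) = ⨆ n, Phi G body E (X n) := by
  funext σ
  simp only [Phi, iSup_apply]
  split_ifs
  · simp_rw [ENNReal.mul_iSup]
    exact ENNReal.tsum_iSup_of_monotone fun _ _ hij τ => by gcongr; exact hX hij τ
  · exact iSup_const.symm

theorem phi_omega_continuous_and_kleene_general {S : Type*}
    (G : S → Prop) [DecidablePred G] (body : S → PMF S) (E : S → ℝ≥0∞) :
    (∀ X : ℕ → S → ℝ≥0∞, Monotone X →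
      Phi G body E (⨆ n, X n) = ⨆ n, Phi G body E (X n)) ∧
    OrderHom.lfp (PhiHom G body E) = ⨆ n, (Phi G body E)^[n] ⊥ :=
  ⟨Phi_iSup_of_monotone G body E, fixedPoints.lfp_eq_sSup_iterate _ <|
    (PhiHom G body E).ωScottContinuous_of_map_iSup (Phi_iSup_of_monotone G body E)⟩

/-- the characteristic function commutes with countable suprema of
monotone sequences of expectations; consequently (Kleene fixed-point theorem)
its least fixed point is the supremum of its iterates from ⊥. -/
theorem phi_omega_continuous_and_kleene {S : Type*} [Countable S]
    (G : S → Prop) [DecidablePred G] (body : S → PMF S) (E : S → ℝ≥0∞) :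
    (∀ X : ℕ → S → ℝ≥0∞, Monotone X →
      Phi G body E (⨆ n, X n) = ⨆ n, Phi G body E (X n)) ∧
    OrderHom.lfp (PhiHom G body E) = ⨆ n, (Phi G body E)^[n] ⊥ :=
  phi_omega_continuous_and_kleene_general G body E
end

section
/- Loop unrolling for expected values: for every post-expectation E : Σ → ℝ≥0∞, every n : ℕ, and every σ : Σ, the expected value of E under the (n+1)-step stopped kernel is obtained by applying the characteristic function to the expected value under the n-step stopped kernel: ∑' τ, μ_{n+1} σ τ * E τ = Φ_E (fun σ' => ∑' τ, μ_n σ' τ * E τ) σ. -/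
open ENNReal

theorem ENNReal.tsum_tsum_mul_mul_comm {α β : Type*} (p : α → ℝ≥0∞) (k : α → β → ℝ≥0∞)
    (f : β → ℝ≥0∞) :
    ∑' b, (∑' a, p a * k a b) * f b = ∑' a, p a * ∑' b, k a b * f b := by
  simp only [← ENNReal.tsum_mul_right, ← ENNReal.tsum_mul_left, mul_assoc]
  exact ENNReal.tsum_comm

theorem tsum_mu_zero_mul_of_not {S : Type*} [DecidableEq S] (G : S → Prop) [DecidablePred G]
    (body : S → PMF S) (E : S → ℝ≥0∞) {σ : S} (hσ : ¬ G σ) :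
    ∑' τ, mu G body 0 σ τ * E τ = E σ := by
  rw [tsum_eq_single σ fun τ hτ => by simp [mu, hτ]]
  simp [mu, hσ]

theorem mu_succ_expectation_general {S : Type*} [DecidableEq S]
    (G : S → Prop) [DecidablePred G] (body : S → PMF S)
    (E : S → ℝ≥0∞) (n : ℕ) (σ : S) :
    ∑' τ, mu G body (n + 1) σ τ * E τ =
      Phi G body E (fun σ' => ∑' τ, mu G body n σ' τ * E τ) σ := by
  by_cases hσ : G σ
  · simp only [mu.eq_2, Phi, hσ, if_true, ENNReal.tsum_tsum_mul_mul_comm]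
  · simp only [mu.eq_2, Phi, hσ, if_false]
    exact tsum_mu_zero_mul_of_not G body E hσ

/-- loop unrolling for expected values under the stopped kernels. -/
theorem mu_succ_expectation {S : Type*} [Countable S] [DecidableEq S]
    (G : S → Prop) [DecidablePred G] (body : S → PMF S)
    (E : S → ℝ≥0∞) (n : ℕ) (σ : S) :
    ∑' τ, mu G body (n + 1) σ τ * E τ =
      Phi G body E (fun σ' => ∑' τ, mu G body n σ' τ * E τ) σ :=
  mu_succ_expectation_general G body E n σ
end
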